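/- Let L ⊆ GS be such that the NetKAT Myhill–Nerode relation ≡_L has exactly n equivalence classes (n finite), and let M be any PNKA with L(M) = L and exactly n states. Then M is isomorphic to the quotient automaton P_L. -/
import Mathlib


namespace NetKATLearn

variable {F V : Type}

/-- A packet assigns a value to each field. -/
abbrev Packet (F V : Type) : Type := F → V

/-- A guarded string `(α, w, β)`, representing the trace `α·(w₁·dup)⋯(wₖ·dup)·β`. -/
abbrev GString (F V : Type) : Type := Packet F V × List (Packet F V) × Packet F V

/-- A guarded string prefix `(α, w)`. -/
abbrev GPrefix (F V : Type) : Type := Packet F V × List (Packet F V)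

/-- A guarded string suffix `(m, β)`. -/
abbrev GSuffix (F V : Type) : Type := List (Packet F V) × Packet F V

/-- `last(p)`: the last element of `w` if `w` is nonempty, and `α` otherwise. -/
def lastP (p : GPrefix F V) : Packet F V := p.2.getLast?.getD p.1

-- Partial concatenation `p ◆ g` of a prefix with a guarded string:
-- defined iff `last p = g.1`, in which case it is `(p.1, p.2 ++ g.2.1, g.2.2)`.
open Classical in
noncomputable def pconcat (p : GPrefix F V) (g : GString F V) : Option (GString F V) :=
  if lastP p = g.1 then some (p.1, p.2 ++ g.2.1, g.2.2) else none

/-- The NetKAT Myhill–Nerode relation `s ≡_L t`: for every guarded string `g`,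
`s ◆ g` and `t ◆ g` are both undefined, or both defined and agree on membership in `L`. -/
def MN (L : Set (GString F V)) (s t : GPrefix F V) : Prop :=
  ∀ g : GString F V,
    (pconcat s g).isSome = (pconcat t g).isSome ∧
      ∀ x ∈ pconcat s g, ∀ y ∈ pconcat t g, (x ∈ L ↔ y ∈ L)

theorem mn_equivalence (L : Set (GString F V)) : Equivalence (MN L) := by
  constructor
  · intro s g
    refine ⟨rfl, fun x hx y hy => ?_⟩
    rw [Option.mem_def] at hx hy
    rw [hx, Option.some_inj] at hy
    subst hy
    exact Iff.rfl
  · intro s t h g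
    obtain ⟨h1, h2⟩ := h g
    exact ⟨h1.symm, fun x hx y hy => (h2 y hy x hx).symm⟩
  · intro s t u h h' g
    obtain ⟨h1, h2⟩ := h g
    obtain ⟨h3, h4⟩ := h' g
    refine ⟨h1.trans h3, fun x hx y hy => ?_⟩
    have hs : (pconcat t g).isSome := by
      rw [← h1]
      exact Option.isSome_iff_exists.mpr ⟨x, hx⟩
    obtain ⟨z, hz⟩ := Option.isSome_iff_exists.mp hs
    exact (h2 x hx z hz).trans (h4 z hz y hy)

/-- The setoid on prefixes given by the NetKAT Myhill–Nerode relation of `L`. -/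
def mnSetoid (L : Set (GString F V)) : Setoid (GPrefix F V) :=
  ⟨MN L, mn_equivalence L⟩

/-- A packet-state NetKAT automaton (PNKA) with state type `Q`,
including the spelling property. -/
structure PNKA (F V Q : Type) where
  q0 : Packet F V → Q
  tr : Q → Packet F V → Q
  obs : Q → Packet F V → Bool
  spell : ∀ (q q' : Q) (α β : Packet F V),
    (tr q α = tr q' β ∨ q0 α = q0 β ∨ q0 α = tr q β) → α = β

/-- Acceptance of a PNKA from a state. -/
def PNKA.run {Q : Type} (M : PNKA F V Q) : Q → List (Packet F V) → Packet F V → Bool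
  | q, [], β => M.obs q β
  | q, β :: m, γ => M.run (M.tr q β) m γ

/-- The language of a PNKA. -/
def PNKA.lang {Q : Type} (M : PNKA F V Q) : Set (GString F V) :=
  {g | M.run (M.q0 g.1) g.2.1 g.2.2 = true}

/-- The state reached by `M` after processing a prefix. -/
def fState {Q : Type} (M : PNKA F V Q) (s : GPrefix F V) : Q :=
  s.2.foldl M.tr (M.q0 s.1)

lemma run_append {Q : Type} (M : PNKA F V Q) (q : Q) (w m : List (Packet F V))
    (β : Packet F V) : M.run q (w ++ m) β = M.run (w.foldl M.tr q) m β := by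
  induction w generalizing q with
  | nil => rfl
  | cons a w ih => simpa [PNKA.run] using ih (M.tr q a)

lemma run_eq_obs {Q : Type} (M : PNKA F V Q) (q : Q) (w : List (Packet F V))
    (β : Packet F V) : M.run q w β = M.obs (w.foldl M.tr q) β := by
  induction w generalizing q with
  | nil => rfl
  | cons a w ih => simpa [PNKA.run] using ih (M.tr q a)

lemma lastP_concat (α β : Packet F V) (w : List (Packet F V)) :
    lastP ((α, w ++ [β]) : GPrefix F V) = β := by
  simp [lastP]

lemma fState_concat {Q : Type} (M : PNKA F V Q) (α β : Packet F V)
    (w : List (Packet F V)) :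
    fState M (α, w ++ [β]) = M.tr (fState M (α, w)) β := by
  simp [fState]

/-- By the spelling property, the state reached determines the last packet. -/
lemma spell_last {Q : Type} (M : PNKA F V Q) (s t : GPrefix F V)
    (h : fState M s = fState M t) : lastP s = lastP t := by
  obtain ⟨α, w⟩ := s; obtain ⟨γ, m⟩ := t
  rcases w.eq_nil_or_concat with rfl | ⟨w', β, rfl⟩ <;>
    rcases m.eq_nil_or_concat with rfl | ⟨m', δ, rfl⟩ <;>
      simp only [fState, List.concat_eq_append, List.foldl_append, List.foldl_nil,
        List.foldl_cons] at h
  · simpa [lastP] using M.spell (M.q0 α) (M.q0 α) α γ (Or.inr (Or.inl h))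
  · simpa [lastP, List.concat_eq_append] using
      M.spell (m'.foldl M.tr (M.q0 γ)) (M.q0 α) α δ (Or.inr (Or.inr h))
  · simpa [lastP, List.concat_eq_append] using
      (M.spell (w'.foldl M.tr (M.q0 α)) (M.q0 γ) γ β (Or.inr (Or.inr h.symm))).symm
  · simpa [lastP, List.concat_eq_append] using
      M.spell (w'.foldl M.tr (M.q0 α)) (m'.foldl M.tr (M.q0 γ)) β δ (Or.inl h)

/-- MN-equivalent prefixes have the same last packet. -/
lemma MN.lastP_eq {L : Set (GString F V)} {s t : GPrefix F V} (h : MN L s t) :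
    lastP s = lastP t := by
  have h1 := (h (lastP s, [], lastP s)).1
  rw [pconcat, pconcat, if_pos rfl] at h1
  by_cases hc : lastP t = lastP s
  · exact hc.symm
  · rw [if_neg hc] at h1
    simp at h1

/-- MN is preserved under appending a packet to the prefix. -/
lemma MN.concat {L : Set (GString F V)} {s t : GPrefix F V} (h : MN L s t)
    (β : Packet F V) : MN L (s.1, s.2 ++ [β]) (t.1, t.2 ++ [β]) := by
  have hlast : lastP s = lastP t := h.lastP_eq
  rintro ⟨γ, m, δ⟩
  by_cases hβ : β = γ
  · subst hβ
    have h' := h (lastP s, β :: m, δ)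
    rw [pconcat, pconcat, if_pos rfl, if_pos hlast.symm] at h'
    rw [pconcat, pconcat, if_pos (lastP_concat s.1 β s.2), if_pos (lastP_concat t.1 β t.2)]
    refine ⟨rfl, ?_⟩
    intro x hx y hy
    simp only [Option.mem_def, Option.some_inj] at hx hy
    subst hx; subst hy
    have := h'.2 (s.1, s.2 ++ β :: m, δ) rfl (t.1, t.2 ++ β :: m, δ) rfl
    simpa [List.append_assoc] using this
  · have c1 : ¬ lastP ((s.1, s.2 ++ [β]) : GPrefix F V) = γ := by
      rw [lastP_concat]; exact hβ
    have c2 : ¬ lastP ((t.1, t.2 ++ [β]) : GPrefix F V) = γ := by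
      rw [lastP_concat]; exact hβ
    rw [pconcat, pconcat, if_neg c1, if_neg c2]
    exact ⟨rfl, by simp⟩

/-- If `≡_L` has exactly `n` classes and `M` is any PNKA with
`L(M) = L` and exactly `n` states, then `M` is isomorphic to the quotient
automaton `P_L`: there is a bijection `h` from the states of `M` to the
`≡_L`-classes carrying `q₀`, `∂`, and `λ` of `M` to those of `P_L`. -/
theorem minimal_pnka_iso_quotient {Q : Type} [Finite Q]
    (L : Set (GString F V)) (hfin : Finite (Quotient (mnSetoid L)))
    (M : PNKA F V Q) (hL : M.lang = L)
    (hcard : Nat.card Q = Nat.card (Quotient (mnSetoid L))) :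
    ∃ h : Q ≃ Quotient (mnSetoid L),
      (∀ α : Packet F V,
        h (M.q0 α) = Quotient.mk (mnSetoid L) (α, ([] : List (Packet F V)))) ∧
      (∀ (q : Q) (β : Packet F V) (s : GPrefix F V),
        h q = Quotient.mk (mnSetoid L) s →
          h (M.tr q β) = Quotient.mk (mnSetoid L) (s.1, s.2 ++ [β]) ∧
            (M.obs q β = true ↔ (s.1, s.2, β) ∈ L)) := by
  classical
  set f : GPrefix F V → Q := fState M with hf
  -- prefixes reaching the same state are MN-equivalent
  have key : ∀ s t : GPrefix F V, f s = f t → MN L s t := by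
    intro s t h g
    have hlast := spell_last M s t h
    have memiff : ∀ u : GPrefix F V, ∀ m : List (Packet F V), ∀ δ : Packet F V,
        ((u.1, u.2 ++ m, δ) ∈ L ↔ M.run (f u) m δ = true) := by
      intro u m δ
      rw [← hL]
      show M.run (M.q0 u.1) (u.2 ++ m) δ = true ↔ _
      rw [run_append]
      rfl
    constructor
    · simp only [pconcat, hlast]
      split <;> rfl
    · intro x hx y hy
      obtain ⟨γ, m, δ⟩ := g
      simp only [pconcat, Option.mem_def] at hx hy
      by_cases hc : lastP s = γ
      · rw [if_pos hc] at hx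
        rw [if_pos (hlast ▸ hc)] at hy
        rw [Option.some_inj] at hx hy
        subst hx; subst hy
        rw [memiff s m δ, memiff t m δ, h]
      · rw [if_neg hc] at hx
        simp at hx
  -- the state map is surjective
  have hfs : Function.Surjective f := by
    have hsurjQ : Function.Surjective
        (fun x : Set.range f => Quotient.mk (mnSetoid L) (Classical.choose x.2)) := by
      intro c
      induction c using Quotient.ind with
      | _ s =>
        refine ⟨⟨f s, ⟨s, rfl⟩⟩, ?_⟩
        exact Quotient.sound (key _ _ (Classical.choose_spec (⟨s, rfl⟩ : ∃ a, f a = f s)))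
    have hle : Nat.card (Quotient (mnSetoid L)) ≤ Nat.card (Set.range f) :=
      Nat.card_le_card_of_surjective _ hsurjQ
    have hrange : Set.range f = Set.univ := by
      refine Set.eq_of_subset_of_ncard_le (Set.subset_univ _) ?_ Set.finite_univ
      rw [Set.ncard_univ, ← Nat.card_coe_set_eq]
      exact hcard ▸ hle
    intro q
    have : q ∈ Set.range f := hrange ▸ Set.mem_univ q
    exact this
  set σ : Q → GPrefix F V := Function.surjInv hfs with hσ
  have hσf : ∀ q : Q, f (σ q) = q := fun q => Function.surjInv_eq hfs q
  set hmap : Q → Quotient (mnSetoid L) := fun q => Quotient.mk (mnSetoid L) (σ q)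
    with hhmap
  have hmap_f : ∀ s : GPrefix F V, hmap (f s) = Quotient.mk (mnSetoid L) s :=
    fun s => Quotient.sound (key _ _ (hσf (f s)))
  have hsurj' : Function.Surjective hmap := by
    intro c
    induction c using Quotient.ind with
    | _ s => exact ⟨f s, hmap_f s⟩
  haveI : Fintype Q := Fintype.ofFinite Q
  haveI : Fintype (Quotient (mnSetoid L)) := Fintype.ofFinite _
  have hbij : Function.Bijective hmap := by
    rw [Fintype.bijective_iff_surjective_and_card]
    refine ⟨hsurj', ?_⟩
    rw [← Nat.card_eq_fintype_card, ← Nat.card_eq_fintype_card]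
    exact hcard
  refine ⟨Equiv.ofBijective hmap hbij, ?_, ?_⟩
  · intro α
    exact hmap_f (α, [])
  · intro q β s hqs
    have hq' : Quotient.mk (mnSetoid L) (σ q) = Quotient.mk (mnSetoid L) s := hqs
    have hts : MN L (σ q) s := Quotient.exact hq'
    have hlast : lastP (σ q) = lastP s := hts.lastP_eq
    constructor
    · have htr : M.tr q β = f ((σ q).1, (σ q).2 ++ [β]) := by
        rw [hf, fState_concat]
        show M.tr q β = M.tr (fState M ((σ q).1, (σ q).2)) β
        rw [show ((σ q).1, (σ q).2) = σ q from rfl, ← hf, hσf]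
      show hmap (M.tr q β) = _
      rw [htr, hmap_f]
      exact Quotient.sound (hts.concat β)
    · have hobs : M.obs q β = true ↔ ((σ q).1, (σ q).2, β) ∈ L := by
        rw [← hL]
        show M.obs q β = true ↔ M.run (M.q0 (σ q).1) (σ q).2 β = true
        rw [run_eq_obs,
          show (σ q).2.foldl M.tr (M.q0 (σ q).1) = f (σ q) from rfl, hσf]
      rw [hobs]
      have h' := hts (lastP (σ q), [], β)
      rw [pconcat, pconcat, if_pos rfl, if_pos hlast.symm] at h'
      have := h'.2 ((σ q).1, (σ q).2 ++ [], β) rfl (s.1, s.2 ++ [], β) rfl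
      simpa using this

end NetKATLearn
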